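/- arXiv:0801.0736 — 5 statements merged into one kernel-verified Lean document; each statement's English description precedes it below -/
import Mathlib

section
/- Let f : X → X be a homeomorphism of a locally compact metric space with an attracting fixed point x₀ and let U be the basin of attraction of x₀ with respect to f. If x₀ is also an attracting fixed point for a homeomorphism g : X → X that commutes with f, then U is equal to the basin of attraction of x₀ with respect to g. -/
open Filter

/-- `x₀` is an attracting fixed point for `f`: it is fixed and has a compact
neighborhood `W` whose forward iterates converge to `{x₀}` in the Hausdorff
topology, i.e. eventually enter every neighborhood of `x₀`. -/
def IsAttractingFixedPt {X : Type*} [TopologicalSpace X] (f : X → X) (x₀ : X) : Prop :=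
  f x₀ = x₀ ∧ ∃ W : Set X, IsCompact W ∧ W ∈ nhds x₀ ∧
    ∀ N ∈ nhds x₀, ∀ᶠ n : ℕ in atTop, f^[n] '' W ⊆ N

/-- The basin of attraction of `x₀` with respect to `f`:
the set of points whose forward orbit converges to `x₀`. -/
def basin {X : Type*} [TopologicalSpace X] (f : X → X) (x₀ : X) : Set X :=
  {x | Tendsto (fun n => f^[n] x) atTop (nhds x₀)}

lemma basin_subset_aux {X : Type*} [MetricSpace X]
    (f g : X ≃ₜ X) (x₀ : X) (hf0 : f x₀ = x₀)
    (hcomm : ∀ x, f (g x) = g (f x)) (hg : IsAttractingFixedPt (⇑g) x₀) :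
    basin (⇑f) x₀ ⊆ basin (⇑g) x₀ := by
  obtain ⟨hg0, W, hWc, hWn, hW⟩ := hg
  intro x hx
  obtain ⟨N, hN⟩ := (hx.eventually_mem hWn).exists
  have hcom : Function.Commute (⇑f) (⇑g) := fun x => hcomm x
  have hy : Tendsto (fun n => g^[n] (f^[N] x)) atTop (nhds x₀) := by
    rw [Filter.tendsto_def]
    intro s hs
    filter_upwards [hW s hs] with n hn
    exact hn ⟨_, hN, rfl⟩
  have hfix : (⇑f.symm)^[N] x₀ = x₀ :=
    Function.iterate_fixed (f.symm_apply_eq.2 hf0.symm) N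
  have key : ∀ n, g^[n] x = (⇑f.symm)^[N] (g^[n] (f^[N] x)) := by
    intro n
    have hc : f^[N] (g^[n] x) = g^[n] (f^[N] x) :=
      (hcom.iterate_iterate N n).eq x
    rw [← hc]
    have : ∀ y, (⇑f.symm)^[N] (f^[N] y) = y :=
      (Function.LeftInverse.iterate f.symm_apply_apply N)
    rw [this]
  have hcont : Continuous ((⇑f.symm)^[N]) := f.symm.continuous.iterate N
  have : Tendsto (fun n => (⇑f.symm)^[N] (g^[n] (f^[N] x))) atTop (nhds x₀) := by
    have := (hcont.tendsto' x₀ x₀ hfix).comp hy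
    exact this
  simpa only [basin, Set.mem_setOf_eq, funext key] using this

/-- If `x₀` is an attracting fixed point for a homeomorphism `f` of a locally compact
metric space and also for a homeomorphism `g` commuting with `f`, then the basin of
attraction of `x₀` for `f` equals that for `g`. -/
theorem stmt_5 {X : Type*} [MetricSpace X] [LocallyCompactSpace X]
    (f g : X ≃ₜ X) (x₀ : X) (hf : IsAttractingFixedPt (⇑f) x₀)
    (hcomm : ∀ x, f (g x) = g (f x)) (hg : IsAttractingFixedPt (⇑g) x₀) :
    basin (⇑f) x₀ = basin (⇑g) x₀ :=
  Set.Subset.antisymm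
    (basin_subset_aux f g x₀ hf.1 hcomm hg)
    (basin_subset_aux g f x₀ hg.1 (fun x => (hcomm x).symm) hf)
end

section
/- Let f : X → X be a homeomorphism of a locally compact metric space and let x₀ ∈ X be an attracting fixed point for f. If g : X → X is a homeomorphism that commutes with f and fixes x₀, then there exists m > 0 such that x₀ is an attracting fixed point for the homeomorphism h = fᵐ ∘ g. -/
/-!
Commuting with `f`, the map `g` sends the basin of `x₀` into itself, so `g '' W` is a compact
subset of the basin. Attraction is uniform on compact subsets of the basin (each point enters
`interior W` after finitely many steps, and finitely many such open sets cover), so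
`fⁿ (g '' W) ⊆ W` for some `n`. Then `h' = fⁿ ∘ g` commutes with `f` and maps `W` into itself,
and `(f ∘ h')ᵏ '' W = fᵏ '' (h'ᵏ '' W) ⊆ fᵏ '' W` shrinks to `x₀`; take `m = n + 1`.
-/

open Filter

open Set Function Topology

section

variable {X : Type*} [TopologicalSpace X] {f : X → X} {x₀ : X} {W : Set X}

theorem subset_basin_of_eventually_image_subset
    (hW : ∀ N ∈ 𝓝 x₀, ∀ᶠ n in atTop, f^[n] '' W ⊆ N) : W ⊆ basin f x₀ := fun _ hx N hN =>
  (hW N hN).mono fun _ hn => hn (mem_image_of_mem _ hx)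

theorem eventually_iterate_image_preimage_subset
    (hW : ∀ N ∈ 𝓝 x₀, ∀ᶠ n in atTop, f^[n] '' W ⊆ N) (k : ℕ) {N : Set X} (hN : N ∈ 𝓝 x₀) :
    ∀ᶠ n in atTop, f^[n] '' (f^[k] ⁻¹' W) ⊆ N := by
  filter_upwards [(tendsto_sub_atTop_nat k).eventually (hW N hN), eventually_ge_atTop k]
    with n hn hkn
  rintro _ ⟨x, hx, rfl⟩
  rw [← Nat.sub_add_cancel hkn, iterate_add_apply]
  exact hn (mem_image_of_mem _ hx)

theorem IsCompact.eventually_iterate_image_subset (hf : Continuous f) (hWn : W ∈ 𝓝 x₀)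
    (hW : ∀ N ∈ 𝓝 x₀, ∀ᶠ n in atTop, f^[n] '' W ⊆ N) {K : Set X} (hK : IsCompact K)
    (hKb : K ⊆ basin f x₀) {N : Set X} (hN : N ∈ 𝓝 x₀) :
    ∀ᶠ n in atTop, f^[n] '' K ⊆ N := by
  refine hK.induction_on (p := fun s => ∀ᶠ n in atTop, f^[n] '' s ⊆ N)
    (by simp) (fun s t hst ht => ht.mono fun _ h => (image_mono hst).trans h)
    (fun s t hs ht => (hs.and ht).mono fun _ h => image_union .. ▸ union_subset h.1 h.2) ?_
  intro x hx
  obtain ⟨k, hk⟩ := ((hKb hx).eventually (interior_mem_nhds.mpr hWn)).exists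
  refine ⟨f^[k] ⁻¹' interior W, mem_nhdsWithin_of_mem_nhds ?_, ?_⟩
  · exact (hf.iterate k).continuousAt.preimage_mem_nhds (isOpen_interior.mem_nhds hk)
  · exact (eventually_iterate_image_preimage_subset hW k hN).mono fun _ h =>
      (image_mono (preimage_mono interior_subset)).trans h

theorem Function.Commute.mapsTo_basin {g : X → X} (hcomm : Function.Commute f g)
    (hg : ContinuousAt g x₀) (hgx₀ : g x₀ = x₀) : MapsTo g (basin f x₀) (basin f x₀) := by
  intro y hy
  have hg' : Tendsto g (𝓝 x₀) (𝓝 x₀) := by simpa only [hgx₀] using hg.tendsto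
  exact (hg'.comp hy).congr fun n => (hcomm.iterate_left n y).symm

theorem isAttractingFixedPt_comp_of_mapsTo (hfix : f x₀ = x₀) (hWc : IsCompact W)
    (hWn : W ∈ 𝓝 x₀) (hW : ∀ N ∈ 𝓝 x₀, ∀ᶠ n in atTop, f^[n] '' W ⊆ N) {h : X → X}
    (hcomm : Function.Commute f h) (hWh : MapsTo h W W) (hhx₀ : h x₀ = x₀) :
    IsAttractingFixedPt (f ∘ h) x₀ := by
  refine ⟨by simp [hhx₀, hfix], W, hWc, hWn, fun N hN => (hW N hN).mono fun n hn => ?_⟩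
  rw [hcomm.comp_iterate, image_comp]
  exact (image_mono (hWh.iterate n).image_subset).trans hn

end

theorem stmt_6_general {X : Type*} [MetricSpace X]
    (f g : X ≃ₜ X) (x₀ : X) (hf : IsAttractingFixedPt (⇑f) x₀)
    (hcomm : ∀ x, f (g x) = g (f x)) (hgfix : g x₀ = x₀) :
    ∃ m : ℕ, 0 < m ∧ IsAttractingFixedPt ((⇑f)^[m] ∘ ⇑g) x₀ := by
  obtain ⟨hfix, W, hWc, hWn, hW⟩ := hf
  have hcomm : Function.Commute f g := hcomm
  have hgW : g '' W ⊆ basin f x₀ :=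
    ((hcomm.mapsTo_basin g.continuous.continuousAt hgfix).mono_left
      (subset_basin_of_eventually_image_subset hW)).image_subset
  obtain ⟨n, hn⟩ := ((hWc.image g.continuous).eventually_iterate_image_subset f.continuous hWn
    hW hgW hWn).exists
  refine ⟨n + 1, n.succ_pos, ?_⟩
  rw [iterate_succ', comp_assoc]
  refine isAttractingFixedPt_comp_of_mapsTo hfix hWc hWn hW
    ((Function.Commute.self_iterate f n).comp_right hcomm) ?_
    (by simp [hgfix, iterate_fixed hfix])
  rwa [mapsTo_iff_image_subset, image_comp]

/-- If `x₀` is an attracting fixed point for a homeomorphism `f` of a locally compact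
metric space and `g` is a homeomorphism commuting with `f` that fixes `x₀`, then
there is `m > 0` such that `x₀` is an attracting fixed point for `h = fᵐ ∘ g`. -/
theorem stmt_6 {X : Type*} [MetricSpace X] [LocallyCompactSpace X]
    (f g : X ≃ₜ X) (x₀ : X) (hf : IsAttractingFixedPt (⇑f) x₀)
    (hcomm : ∀ x, f (g x) = g (f x)) (hgfix : g x₀ = x₀) :
    ∃ m : ℕ, 0 < m ∧ IsAttractingFixedPt ((⇑f)^[m] ∘ ⇑g) x₀ :=
  stmt_6_general f g x₀ hf hcomm hgfix
end

section
/- Let f : X → X be a homeomorphism of a locally compact metric space, let p₁, …, p_k be attracting fixed points of f, let q₁, …, q_l be repelling fixed points of f, and let g : X → X be a homeomorphism that commutes with f and fixes each p_i and each q_j. Then there exists m > 0 such that, for the homeomorphism h = fᵐ ∘ g, each p_i is an attracting fixed point for h and each q_j is a repelling fixed point for h. -/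
open Filter

/-! If `f` attracts a compact neighbourhood `W` of `p` and `g` commutes with `f` and fixes `p`,
then `f^[a] ∘ g` maps `W` into itself for some `a`. For `m > a` the iterates of `f^[m] ∘ g` are
`f^[(m - a) * n] ∘ (f^[a] ∘ g)^[n]`, so they map `W` into `f^[(m - a) * n] '' W`, which shrinks
to `p`. Applying this to `f` at the `pᵢ` and to `f⁻¹` at the `qⱼ`, any large `m` works. -/

namespace Function.Commute

variable {α : Type*} {f g : α → α}

theorem iterate_add_comp_iterate (h : Function.Commute f g) (a b n : ℕ) :
    (f^[b + a] ∘ g)^[n] = f^[b * n] ∘ (f^[a] ∘ g)^[n] := by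
  have hb : Function.Commute f^[b] (f^[a] ∘ g) :=
    (Function.Commute.iterate_iterate_self f b a).comp_right (h.iterate_left b)
  rw [Function.iterate_add, Function.comp_assoc, hb.comp_iterate, Function.iterate_mul]

theorem image_iterate_image (h : Function.Commute f g) (n : ℕ) (s : Set α) :
    f^[n] '' (g '' s) = g '' (f^[n] '' s) := by
  simp only [Set.image_image, (h.iterate_left n) _]

end Function.Commute

theorem IsAttractingFixedPt.eventually_iterate_comp {X : Type*} [TopologicalSpace X]
    {f g : X → X} {p : X} (hf : IsAttractingFixedPt f p) (hfg : Function.Commute f g)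
    (hg : ContinuousAt g p) (hgp : g p = p) :
    ∀ᶠ m in atTop, IsAttractingFixedPt (f^[m] ∘ g) p := by
  obtain ⟨hfp, W, hWc, hWn, hW⟩ := hf
  have hgW : ∀ᶠ n in atTop, f^[n] '' (g '' W) ⊆ W := by
    filter_upwards [hW _ (hg.preimage_mem_nhds (hgp.symm ▸ hWn))] with n hn
    rw [hfg.image_iterate_image, Set.image_subset_iff]
    exact hn
  obtain ⟨a, ha⟩ := hgW.exists
  have hself : Set.MapsTo (f^[a] ∘ g) W W := by
    rw [Set.mapsTo_iff_image_subset, Set.image_comp]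
    exact ha
  filter_upwards [eventually_gt_atTop a] with m hm
  refine ⟨by simp [hgp, Function.iterate_fixed hfp], W, hWc, hWn, fun N hN => ?_⟩
  obtain ⟨n₀, hn₀⟩ := (hW N hN).exists_forall_of_atTop
  filter_upwards [eventually_ge_atTop n₀] with n hn
  obtain ⟨b, rfl⟩ := Nat.exists_eq_add_of_lt hm
  rw [show a + b + 1 = (b + 1) + a by ring, hfg.iterate_add_comp_iterate, Set.image_comp]
  exact (Set.image_mono ((hself.iterate n).image_subset)).trans
    (hn₀ _ (hn.trans (Nat.le_mul_of_pos_left n b.succ_pos)))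

namespace Homeomorph

variable {X : Type*} [TopologicalSpace X]

theorem coe_pow (f : X ≃ₜ X) : ∀ n : ℕ, ⇑(f ^ n) = (⇑f)^[n]
  | 0 => rfl
  | n + 1 => by rw [pow_succ, Function.iterate_succ, ← coe_pow f n]; rfl

theorem coe_pow_mul (f g : X ≃ₜ X) (n : ℕ) : ⇑(f ^ n * g) = (⇑f)^[n] ∘ ⇑g := by
  rw [← coe_pow]; rfl

theorem commute_iff_commute_coe {f g : X ≃ₜ X} : Commute f g ↔ Function.Commute ⇑f ⇑g :=
  ⟨fun h x => DFunLike.congr_fun h.eq x, fun h => Homeomorph.ext h⟩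

end Homeomorph

theorem stmt_11_general {X : Type*} [MetricSpace X]
    (f : X ≃ₜ X) {k l : ℕ} (p : Fin k → X) (q : Fin l → X)
    (hp : ∀ i, IsAttractingFixedPt (⇑f) (p i))
    (hq : ∀ j, IsAttractingFixedPt (⇑f.symm) (q j))
    (g : X ≃ₜ X) (hcomm : ∀ x, f (g x) = g (f x))
    (hgp : ∀ i, g (p i) = p i) (hgq : ∀ j, g (q j) = q j) :
    ∃ m : ℕ, 0 < m ∧ ∃ h : X ≃ₜ X, ⇑h = (⇑f)^[m] ∘ ⇑g ∧
      (∀ i, IsAttractingFixedPt (⇑h) (p i)) ∧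
      (∀ j, IsAttractingFixedPt (⇑h.symm) (q j)) := by
  have hfg : Commute f g := Homeomorph.commute_iff_commute_coe.2 hcomm
  have hfg_inv : Function.Commute ⇑f.symm ⇑g.symm :=
    Homeomorph.commute_iff_commute_coe.1 hfg.inv_inv
  have hgq_inv (j : Fin l) : g.symm (q j) = q j := g.symm_apply_eq.2 (hgq j).symm
  obtain ⟨m, hm, hpm, hqm⟩ := ((eventually_gt_atTop 0).and <|
    (eventually_all.2 fun i => (hp i).eventually_iterate_comp
      hcomm g.continuous.continuousAt (hgp i)).and <|
    eventually_all.2 fun j => (hq j).eventually_iterate_comp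
      hfg_inv g.symm.continuous.continuousAt (hgq_inv j)).exists
  have hinv : (f ^ m * g)⁻¹ = f⁻¹ ^ m * g⁻¹ := by
    rw [(hfg.pow_left m).mul_inv, inv_pow]
  refine ⟨m, hm, f ^ m * g, Homeomorph.coe_pow_mul f g m, fun i => ?_, fun j => ?_⟩
  · rw [Homeomorph.coe_pow_mul]
    exact hpm i
  · change IsAttractingFixedPt ⇑(f ^ m * g)⁻¹ (q j)
    rw [hinv, Homeomorph.coe_pow_mul]
    exact hqm j

/-- If `f` is a homeomorphism of a locally compact metric space with attracting fixed
points `p₁,…,p_k` and repelling fixed points `q₁,…,q_l`, and `g` is a homeomorphism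
commuting with `f` fixing each `p_i` and each `q_j`, then there is `m > 0` such that
for `h = fᵐ ∘ g` each `p_i` is attracting and each `q_j` is repelling for `h`. -/
theorem stmt_11 {X : Type*} [MetricSpace X] [LocallyCompactSpace X]
    (f : X ≃ₜ X) {k l : ℕ} (p : Fin k → X) (q : Fin l → X)
    (hp : ∀ i, IsAttractingFixedPt (⇑f) (p i))
    (hq : ∀ j, IsAttractingFixedPt (⇑f.symm) (q j))
    (g : X ≃ₜ X) (hcomm : ∀ x, f (g x) = g (f x))
    (hgp : ∀ i, g (p i) = p i) (hgq : ∀ j, g (q j) = q j) :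
    ∃ m : ℕ, 0 < m ∧ ∃ h : X ≃ₜ X, ⇑h = (⇑f)^[m] ∘ ⇑g ∧
      (∀ i, IsAttractingFixedPt (⇑h) (p i)) ∧
      (∀ j, IsAttractingFixedPt (⇑h.symm) (q j)) :=
  stmt_11_general f p q hp hq g hcomm hgp hgq
end

section
/- Let f : ℝ² → ℝ² be a homeomorphism with an attracting fixed point x₀ and let U be the basin of attraction of x₀ with respect to f. Then U is open, connected, and simply connected. -/
open Filter

/-!
Let `B ⊆ W` be a round ball about `x₀`. A point lies in the basin as soon as one of its iterates
lands in `B`, so the basin is the union of the open sets `f⁻ⁿ(B)`; this family is directed, since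
every iterate of `W` from some time on lies in `B`. Each `f⁻ⁿ(B)` is homeomorphic to the ball,
hence simply connected, and a loop in the union is compact, so it lies in one `f⁻ⁿ(B)` and is
null-homotopic there.
-/

open Set Topology

section DirectedUnion

variable {X ι : Type*} [TopologicalSpace X] [Nonempty ι] {D : ι → Set X}

theorem IsPathConnected.iUnion_of_directed (hdir : Directed (· ⊆ ·) D)
    (hD : ∀ i, IsPathConnected (D i)) : IsPathConnected (⋃ i, D i) := by
  refine isPathConnected_iff.mpr ⟨?_, fun x hx y hy => ?_⟩
  · obtain ⟨i⟩ := ‹Nonempty ι›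
    exact (hD i).nonempty.mono (subset_iUnion D i)
  obtain ⟨i, hxi⟩ := mem_iUnion.mp hx
  obtain ⟨j, hyj⟩ := mem_iUnion.mp hy
  obtain ⟨k, hik, hjk⟩ := hdir i j
  exact ((hD k).joinedIn x (hik hxi) y (hjk hyj)).mono (subset_iUnion D k)

theorem IsSimplyConnected.iUnion_of_directed (hdir : Directed (· ⊆ ·) D)
    (hopen : ∀ i, IsOpen (D i)) (hD : ∀ i, IsSimplyConnected (D i)) :
    IsSimplyConnected (⋃ i, D i) := by
  refine isSimplyConnected_iff_exists_homotopy_refl_forall_mem.mpr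
    ⟨.iUnion_of_directed hdir fun i => (hD i).isPathConnected, fun x p hp => ?_⟩
  obtain ⟨i, hpi⟩ := (isCompact_range p.continuous).elim_directed_cover D hopen
    (range_subset_iff.mpr hp) hdir
  obtain ⟨F, hF⟩ := (isSimplyConnected_iff_exists_homotopy_refl_forall_mem.mp (hD i)).2 x p
    fun t => hpi (mem_range_self t)
  exact ⟨F, fun t => subset_iUnion D i (hF t)⟩

end DirectedUnion

theorem iterate_mem_of_forall_image_iterate_subset {X : Type*} {f : X → X} {W N : Set X} {x : X}
    {m k n : ℕ} (hm : ∀ j ≥ m, f^[j] '' W ⊆ N) (hk : f^[k] x ∈ W) (hn : m + k ≤ n) : f^[n] x ∈ N := by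
  have hsplit : f^[n - k] (f^[k] x) = f^[n] x := by
    rw [← Function.iterate_add_apply, Nat.sub_add_cancel (by omega)]
  exact hm (n - k) (by omega) ⟨f^[k] x, hk, hsplit⟩

section Basin

variable {X : Type*} [TopologicalSpace X] {f : X → X} {x₀ : X} {W B : Set X}

theorem basin_eq_iUnion_preimage_iterate (hW : ∀ N ∈ 𝓝 x₀, ∀ᶠ n in atTop, f^[n] '' W ⊆ N)
    (hB : B ∈ 𝓝 x₀) (hBW : B ⊆ W) : basin f x₀ = ⋃ n, f^[n] ⁻¹' B := by
  ext x
  refine ⟨fun hx => mem_iUnion.mpr (hx.eventually_mem hB).exists, fun hx => ?_⟩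
  obtain ⟨k, hk⟩ := mem_iUnion.mp hx
  refine tendsto_atTop'.mpr fun N hN => ?_
  obtain ⟨m, hm⟩ := eventually_atTop.mp (hW N hN)
  exact ⟨m + k, fun n hn => iterate_mem_of_forall_image_iterate_subset hm (hBW hk) hn⟩

theorem directed_preimage_iterate (hW : ∀ N ∈ 𝓝 x₀, ∀ᶠ n in atTop, f^[n] '' W ⊆ N)
    (hB : B ∈ 𝓝 x₀) (hBW : B ⊆ W) : Directed (· ⊆ ·) fun n => f^[n] ⁻¹' B := by
  obtain ⟨m, hm⟩ := eventually_atTop.mp (hW B hB)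
  have hlater : ∀ k n, m + k ≤ n → f^[k] ⁻¹' B ⊆ f^[n] ⁻¹' B := fun _ _ hkn _ hx =>
    iterate_mem_of_forall_image_iterate_subset hm (hBW hx) hkn
  exact fun i j => ⟨m + i + j, hlater i _ (by omega), hlater j _ (by omega)⟩

theorem isOpen_basin (hf : Continuous f) (hW : ∀ N ∈ 𝓝 x₀, ∀ᶠ n in atTop, f^[n] '' W ⊆ N)
    (hBo : IsOpen B) (hB : x₀ ∈ B) (hBW : B ⊆ W) : IsOpen (basin f x₀) := by
  rw [basin_eq_iUnion_preimage_iterate hW (hBo.mem_nhds hB) hBW]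
  exact isOpen_iUnion fun n => hBo.preimage (hf.iterate n)

theorem isSimplyConnected_basin {f : X ≃ₜ X}
    (hW : ∀ N ∈ 𝓝 x₀, ∀ᶠ n in atTop, (⇑f)^[n] '' W ⊆ N) (hBo : IsOpen B) (hB : x₀ ∈ B)
    (hBW : B ⊆ W) (hBsc : IsSimplyConnected B) : IsSimplyConnected (basin f x₀) := by
  have hBn : B ∈ 𝓝 x₀ := hBo.mem_nhds hB
  rw [basin_eq_iUnion_preimage_iterate hW hBn hBW]
  have hpow : ∀ n, ⇑(f ^ n) = (⇑f)^[n] := hom_coe_pow DFunLike.coe rfl (fun _ _ => rfl) f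
  refine .iUnion_of_directed (directed_preimage_iterate hW hBn hBW)
    (fun n => hBo.preimage (f.continuous.iterate n)) fun n => ?_
  rw [← hpow]
  exact (f ^ n).isSimplyConnected_preimage.mpr hBsc

end Basin

theorem IsAttractingFixedPt.isOpen_basin_and_isSimplyConnected_basin {E : Type*}
    [NormedAddCommGroup E] [NormedSpace ℝ E] {f : E ≃ₜ E} {x₀ : E}
    (hf : IsAttractingFixedPt f x₀) :
    IsOpen (basin f x₀) ∧ IsSimplyConnected (basin f x₀) := by
  obtain ⟨-, W, -, hWn, hW⟩ := hf
  obtain ⟨r, hr, hrW⟩ := Metric.mem_nhds_iff.mp hWn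
  have hx₀ : x₀ ∈ Metric.ball x₀ r := Metric.mem_ball_self hr
  have : ContractibleSpace (Metric.ball x₀ r) := (convex_ball x₀ r).contractibleSpace ⟨x₀, hx₀⟩
  exact ⟨isOpen_basin f.continuous hW Metric.isOpen_ball hx₀ hrW,
    isSimplyConnected_basin hW Metric.isOpen_ball hx₀ hrW
      (inferInstance : SimplyConnectedSpace (Metric.ball x₀ r))⟩

/-- The basin of attraction of an attracting fixed point of a homeomorphism of the
plane is open, connected and simply connected. -/
theorem stmt_13 (f : EuclideanSpace ℝ (Fin 2) ≃ₜ EuclideanSpace ℝ (Fin 2))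
    (x₀ : EuclideanSpace ℝ (Fin 2)) (hf : IsAttractingFixedPt (⇑f) x₀) :
    IsOpen (basin (⇑f) x₀) ∧ IsConnected (basin (⇑f) x₀) ∧
      SimplyConnectedSpace (basin (⇑f) x₀) := by
  obtain ⟨hopen, hsc⟩ := hf.isOpen_basin_and_isSimplyConnected_basin
  exact ⟨hopen, hsc.isPathConnected.isConnected, hsc.simplyConnectedSpace⟩
end

section
/- Let G be a group of C¹ diffeomorphisms of ℝ², let F = {x ∈ ℝ² : g(x) = x for all g ∈ G} be its set of global fixed points, and let x ∈ F be a non-isolated point of F. Then there exists a unit vector v ∈ ℝ² such that Dg_x(v) = v for every g ∈ G, where Dg_x denotes the derivative of g at x. -/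
/-!
On the fixed set `F` the map `g` agrees with the identity, so `Dg_x` and the identity are both
derivatives of `g` within `F` at `x` and therefore agree on the tangent cone of `F` at `x`. At a
non-isolated point of a set in a finite-dimensional space this cone contains a nonzero vector
(normalised directions `(u n - x) / ‖u n - x‖` of fixed points `u n → x` accumulate on the unit
sphere), and normalising it gives a unit vector fixed by every `Dg_x`.
-/

open Filter Set

noncomputable section

/-- The group of self-homeomorphisms of a space, with `(f * g) x = f (g x)`. -/
instance homeomorphGroup {X : Type*} [TopologicalSpace X] : Group (X ≃ₜ X) where
  mul f g := g.trans f
  one := Homeomorph.refl X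
  inv := Homeomorph.symm
  mul_assoc a b c := Homeomorph.ext fun _ => rfl
  one_mul a := Homeomorph.ext fun _ => rfl
  mul_one a := Homeomorph.ext fun _ => rfl
  inv_mul_cancel a := Homeomorph.ext a.symm_apply_apply

theorem fderiv_apply_eq_self_of_mem_tangentConeAt {𝕜 E : Type*} [NontriviallyNormedField 𝕜]
    [NormedAddCommGroup E] [NormedSpace 𝕜 E] {f : E → E} {s : Set E} {x v : E}
    (hf : DifferentiableAt 𝕜 f x) (hfs : EqOn f id s) (hx : x ∈ s)
    (hv : v ∈ tangentConeAt 𝕜 s x) : fderiv 𝕜 f x v = v :=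
  hf.hasFDerivAt.hasFDerivWithinAt.unique_on ((hasFDerivWithinAt_id x s).congr' hfs hx) hv

/-- Let `G` be a group of `C¹` diffeomorphisms of the plane (a subgroup of the
homeomorphism group all of whose elements are `C¹` with `C¹` inverse), let `F` be
its set of global fixed points, and let `x ∈ F` be a non-isolated point of `F`.
Then there is a unit vector `v` fixed by the derivative at `x` of every element
of `G`. -/
theorem stmt_14
    (G : Subgroup (EuclideanSpace ℝ (Fin 2) ≃ₜ EuclideanSpace ℝ (Fin 2)))
    (hG : ∀ g ∈ G, ContDiff ℝ 1 ⇑g ∧ ContDiff ℝ 1 ⇑g.symm)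
    (F : Set (EuclideanSpace ℝ (Fin 2)))
    (hF : F = {x | ∀ g ∈ G, g x = x})
    (x : EuclideanSpace ℝ (Fin 2)) (hx : x ∈ F)
    (hnoniso : x ∈ closure (F \ {x})) :
    ∃ v : EuclideanSpace ℝ (Fin 2), ‖v‖ = 1 ∧
      ∀ g ∈ G, fderiv ℝ (⇑g) x v = v := by
  have hacc : AccPt x (𝓟 F) :=
    accPt_principal_iff_clusterPt.2 (mem_closure_iff_clusterPt.1 hnoniso)
  obtain ⟨v, hv, hv0⟩ := tangentConeAt_nonempty_of_properSpace (𝕜 := ℝ) hacc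
  refine ⟨‖v‖⁻¹ • v, norm_smul_inv_norm hv0, fun g hg => ?_⟩
  have hgF : EqOn g id F := fun y hy => by
    rw [hF] at hy
    exact hy g hg
  have hgx : DifferentiableAt ℝ g x := (hG g hg).1.differentiable one_ne_zero x
  rw [map_smul, fderiv_apply_eq_self_of_mem_tangentConeAt hgx hgF hx hv]

end
end
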